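/- Under the continuity assumption on r and P^0, for every ε > 0 there exists N(ε) such that for all N > N(ε), any mean-field policy π* optimal for the mean-field control problem (i.e., J(π*) = sup_{π∈Π} J(π)) is ε-Pareto optimal in the N-agent problem: J^N(π^N(π*)) ≥ sup_{(π^1,…,π^N) ∈ Π_N^N} J^N(π^1,…,π^N) − ε. -/

import Mathlib

open Finset Filter Topology

section MFC

variable {X U X0 : Type*} [Fintype X] [Fintype U] [Fintype X0]

/-- The state-action distribution `G(μ,h)(x,u) = h(x)(u)·μ(x)` induced by a state
distribution `μ` and a decision rule `h ∈ 𝓗 = {h : X → 𝒫(U)}`. -/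
noncomputable def jointG (μ : ↥(stdSimplex ℝ X)) (h : X → ↥(stdSimplex ℝ U)) :
    ↥(stdSimplex ℝ (X × U)) :=
  ⟨fun p => (h p.1).1 p.2 * μ.1 p.1,
   ⟨fun p => mul_nonneg ((h p.1).2.1 p.2) (μ.2.1 p.1), by
    calc ∑ p : X × U, (h p.1).1 p.2 * μ.1 p.1
        = ∑ x : X, ∑ u : U, (h x).1 u * μ.1 x := by rw [Fintype.sum_prod_type]
      _ = ∑ x : X, (∑ u : U, (h x).1 u) * μ.1 x := by
          simp [Finset.sum_mul]
      _ = 1 := by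
          simp only [fun x : X => (h x).2.2, one_mul]
          exact μ.2.2⟩⟩

/-- The (deterministic) empirical state-action distribution of the `N+1` sampled
state-action pairs `s i ∈ X × U`. -/
noncomputable def empDist [DecidableEq X] [DecidableEq U] (N : ℕ) (s : Fin (N + 1) → X × U) :
    ↥(stdSimplex ℝ (X × U)) :=
  ⟨fun p => (∑ i, if s i = p then (1 : ℝ) else 0) / (N + 1),
   ⟨fun p => div_nonneg (Finset.sum_nonneg fun i _ => by positivity) (by positivity), by
    rw [← Finset.sum_div, Finset.sum_comm]
    simp only [Finset.sum_ite_eq, Finset.mem_univ, if_true, Finset.sum_const,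
      Finset.card_univ, Fintype.card_fin, nsmul_eq_mul, mul_one]
    rw [Nat.cast_add, Nat.cast_one, div_self (by positivity)]⟩⟩

/-- The probability that the `N+1` agents, with states drawn i.i.d. from `μ0` and actions
drawn conditionally independently from the decision rules `d i`, sample exactly the
state-action pairs `s i`. -/
noncomputable def sampleWeight (N : ℕ) (μ0 : ↥(stdSimplex ℝ X))
    (d : Fin (N + 1) → X → ↥(stdSimplex ℝ U)) (s : Fin (N + 1) → X × U) : ℝ :=
  ∏ i, μ0.1 (s i).1 * (d i (s i).1).1 (s i).2

/-- The expectation `E[f(𝔾^N)]` of a function `f` of the random empirical state-action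
distribution `𝔾^N ~ 𝒢^N(μ0, (d¹,…,d^{N+1}))`. -/
noncomputable def empExp [DecidableEq X] [DecidableEq U] (N : ℕ) (μ0 : ↥(stdSimplex ℝ X))
    (d : Fin (N + 1) → X → ↥(stdSimplex ℝ U))
    (f : ↥(stdSimplex ℝ (X × U)) → ℝ) : ℝ :=
  ∑ s : Fin (N + 1) → X × U, sampleWeight N μ0 d s * f (empDist N s)

/-- The law of the environment state `x^{0,N}_t` of the `(N+1)`-agent system under the
policy tuple `πv`, with agent states resampled i.i.d. from `μ0` at every step. -/
noncomputable def envLawN [DecidableEq X] [DecidableEq U] (N : ℕ) (μ0 : ↥(stdSimplex ℝ X))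
    (μ00 : ↥(stdSimplex ℝ X0))
    (P0 : X0 → ↥(stdSimplex ℝ (X × U)) → ↥(stdSimplex ℝ X0))
    (πv : Fin (N + 1) → ℕ → X0 → X → ↥(stdSimplex ℝ U)) : ℕ → X0 → ℝ
  | 0 => fun y => μ00.1 y
  | t + 1 => fun y => ∑ x0 : X0, envLawN N μ0 μ00 P0 πv t x0 *
      empExp N μ0 (fun i => πv i t x0) (fun G => (P0 x0 G).1 y)

/-- The `(N+1)`-agent objective `J^N(π¹,…,π^{N+1}) = E[∑ₜ γᵗ r(x^{0,N}_t, 𝔾^N_t)]`. -/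
noncomputable def JN [DecidableEq X] [DecidableEq U] (N : ℕ) (μ0 : ↥(stdSimplex ℝ X))
    (μ00 : ↥(stdSimplex ℝ X0))
    (P0 : X0 → ↥(stdSimplex ℝ (X × U)) → ↥(stdSimplex ℝ X0))
    (r : X0 → ↥(stdSimplex ℝ (X × U)) → ℝ) (γ : ℝ)
    (πv : Fin (N + 1) → ℕ → X0 → X → ↥(stdSimplex ℝ U)) : ℝ :=
  ∑' t : ℕ, γ ^ t * ∑ x0 : X0, envLawN N μ0 μ00 P0 πv t x0 *
      empExp N μ0 (fun i => πv i t x0) (fun G => r x0 G)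

/-- The law of the mean-field environment state `x^0_t` under the mean-field policy `π`. -/
noncomputable def envLawMF (μ0 : ↥(stdSimplex ℝ X)) (μ00 : ↥(stdSimplex ℝ X0))
    (P0 : X0 → ↥(stdSimplex ℝ (X × U)) → ↥(stdSimplex ℝ X0))
    (π : ℕ → X0 → X → ↥(stdSimplex ℝ U)) : ℕ → X0 → ℝ
  | 0 => fun y => μ00.1 y
  | t + 1 => fun y => ∑ x0 : X0, envLawMF μ0 μ00 P0 π t x0 *
      (P0 x0 (jointG μ0 (π t x0))).1 y

/-- The mean-field objective `J(π) = E[∑ₜ γᵗ r(x^0_t, G(μ0, π_t(x^0_t)))]`. -/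
noncomputable def JMF (μ0 : ↥(stdSimplex ℝ X)) (μ00 : ↥(stdSimplex ℝ X0))
    (P0 : X0 → ↥(stdSimplex ℝ (X × U)) → ↥(stdSimplex ℝ X0))
    (r : X0 → ↥(stdSimplex ℝ (X × U)) → ℝ) (γ : ℝ)
    (π : ℕ → X0 → X → ↥(stdSimplex ℝ U)) : ℝ :=
  ∑' t : ℕ, γ ^ t * ∑ x0 : X0, envLawMF μ0 μ00 P0 π t x0 * r x0 (jointG μ0 (π t x0))

end MFC

/-!
Averaging the agents' decision rules turns any tuple of individual policies into a mean-field
policy. Agent states are resampled independently at every step, so the empirical state-action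
distribution has variance `O(1/N)` around `G(μ0, averaged rule)`; by Chebyshev and uniform
continuity of `r` and `P⁰` on the compact simplex, one-step rewards and transitions of the
`N`-agent system are then uniformly `δ`-close to those of the mean-field system under the averaged
policy. The environment laws drift apart by at most `t·|X⁰|·δ` at time `t`, which the discount
absorbs: `|J^N(π¹,…) - J(average)| ≤ ε/2` uniformly in the tuple for `N` large. Hence
`J^N(π¹,…) ≤ J(average) + ε/2 ≤ J(π*) + ε/2 ≤ J^N(π^N(π*)) + ε`, as `π*` is its own average.
-/

section Simplex

variable {S T : Type*} [Fintype S] [Fintype T]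

theorem abs_sum_mul_le_of_mem_stdSimplex {q : S → ℝ} (hq : q ∈ stdSimplex ℝ S) {f : S → ℝ}
    {M : ℝ} (hf : ∀ s, |f s| ≤ M) : |∑ s, q s * f s| ≤ M :=
  calc |∑ s, q s * f s| ≤ ∑ s, q s * M :=
        (abs_sum_le_sum_abs _ _).trans <| sum_le_sum fun s _ => by
          rw [abs_mul, abs_of_nonneg (hq.1 s)]
          exact mul_le_mul_of_nonneg_left (hf s) (hq.1 s)
    _ = M := by rw [← sum_mul, hq.2, one_mul]

theorem sum_mul_mem_stdSimplex {q : T → ℝ} (hq : q ∈ stdSimplex ℝ T) {Z : T → S → ℝ}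
    (hZ : ∀ s, Z s ∈ stdSimplex ℝ S) : (fun y => ∑ s, q s * Z s y) ∈ stdSimplex ℝ S := by
  convert (convex_stdSimplex ℝ S).sum_mem (fun s _ => hq.1 s) hq.2 fun s _ => hZ s using 1
  ext y
  simp [Finset.sum_apply]

theorem abs_sum_mul_sub_le {q : S → ℝ} (hq : q ∈ stdSimplex ℝ S) (g : S → ℝ) (c : ℝ) :
    |∑ s, q s * g s - c| ≤ ∑ s, q s * |g s - c| := by
  have hcentre : ∑ s, q s * g s - c = ∑ s, q s * (g s - c) := by
    simp only [mul_sub, sum_sub_distrib, ← sum_mul, hq.2, one_mul]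
  rw [hcentre]
  refine (abs_sum_le_sum_abs _ _).trans_eq (sum_congr rfl fun s _ => ?_)
  rw [abs_mul, abs_of_nonneg (hq.1 s)]

theorem abs_sum_mul_sub_sum_mul_le {ν ν' R R' : S → ℝ} (hν : ν ∈ stdSimplex ℝ S) {δ M : ℝ}
    (hRR' : ∀ x, |R x - R' x| ≤ δ) (hR' : ∀ x, |R' x| ≤ M) :
    |∑ x, ν x * R x - ∑ x, ν' x * R' x| ≤ δ + M * ∑ x, |ν x - ν' x| := by
  have hsplit : ∑ x, ν x * R x - ∑ x, ν' x * R' x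
      = ∑ x, ν x * (R x - R' x) + ∑ x, (ν x - ν' x) * R' x := by
    simp only [mul_sub, sub_mul, sum_sub_distrib]
    ring
  rw [hsplit, mul_sum]
  refine (abs_add_le _ _).trans (add_le_add (abs_sum_mul_le_of_mem_stdSimplex hν hRR') ?_)
  refine (abs_sum_le_sum_abs _ _).trans (sum_le_sum fun x _ => ?_)
  rw [abs_mul, mul_comm M]
  exact mul_le_mul_of_nonneg_left (hR' x) (abs_nonneg _)

end Simplex

section ProductWeights

variable {ι A : Type*} [Fintype ι] [DecidableEq ι] [Fintype A] {w : ι → A → ℝ}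

theorem prod_apply_mem_stdSimplex (hw : ∀ i, w i ∈ stdSimplex ℝ A) :
    (fun s : ι → A => ∏ i, w i (s i)) ∈ stdSimplex ℝ (ι → A) :=
  ⟨fun s => prod_nonneg fun i _ => (hw i).1 (s i), by
    rw [← Fintype.prod_sum]
    exact prod_eq_one fun i _ => (hw i).2⟩

theorem sum_prod_mul_apply (hw : ∀ i, ∑ a, w i a = 1) (i : ι) (g : A → ℝ) :
    ∑ s : ι → A, (∏ j, w j (s j)) * g (s i) = ∑ a, w i a * g a := by
  have hfactor : ∀ s : ι → A,
      (∏ j, w j (s j)) * g (s i) = ∏ j, w j (s j) * if j = i then g (s j) else 1 := by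
    intro s
    rw [prod_mul_distrib, Fintype.prod_ite_eq']
  simp_rw [hfactor]
  rw [← Fintype.prod_sum fun j a => w j a * if j = i then g a else 1,
    Fintype.prod_eq_single i fun j hj => by simp [hj, hw j]]
  simp

theorem sum_prod_mul_apply_mul_apply (hw : ∀ i, ∑ a, w i a = 1) {i j : ι} (hij : i ≠ j)
    (g h : A → ℝ) :
    ∑ s : ι → A, (∏ k, w k (s k)) * (g (s i) * h (s j))
      = (∑ a, w i a * g a) * ∑ a, w j a * h a := by
  have hfactor : ∀ s : ι → A, (∏ k, w k (s k)) * (g (s i) * h (s j))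
      = ∏ k, w k (s k) * ((if k = i then g (s k) else 1) * if k = j then h (s k) else 1) := by
    intro s
    rw [prod_mul_distrib, prod_mul_distrib, Fintype.prod_ite_eq', Fintype.prod_ite_eq']
  simp_rw [hfactor]
  rw [← Fintype.prod_sum fun k a => w k a * ((if k = i then g a else 1) * if k = j then h a else 1)]
  have hk : ∀ k, ∑ a, w k a * ((if k = i then g a else 1) * if k = j then h a else 1)
      = (if k = i then ∑ a, w i a * g a else 1) * if k = j then ∑ a, w j a * h a else 1 := by
    intro k
    by_cases hki : k = i
    · subst hki; simp [hij]
    · by_cases hkj : k = j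
      · subst hkj; simp [hki]
      · simp [hki, hkj, hw k]
  simp_rw [hk, prod_mul_distrib, Fintype.prod_ite_eq']

theorem sum_prod_mul_sq_sum_le (hw : ∀ i, w i ∈ stdSimplex ℝ A) {g : ι → A → ℝ}
    (hg₀ : ∀ i, ∑ a, w i a * g i a = 0) (hg₁ : ∀ i a, |g i a| ≤ 1) :
    ∑ s : ι → A, (∏ i, w i (s i)) * (∑ i, g i (s i)) ^ 2 ≤ Fintype.card ι := by
  have hsum : ∀ i, ∑ a, w i a = 1 := fun i => (hw i).2
  -- independence kills the cross terms
  have hcross : ∀ i j, ∑ s : ι → A, (∏ k, w k (s k)) * (g i (s i) * g j (s j))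
      = if i = j then ∑ a, w i a * g i a ^ 2 else 0 := by
    intro i j
    split_ifs with hij
    · subst hij
      simp_rw [← sq]
      exact sum_prod_mul_apply hsum i fun a => g i a ^ 2
    · rw [sum_prod_mul_apply_mul_apply hsum hij, hg₀ i, zero_mul]
  calc ∑ s : ι → A, (∏ i, w i (s i)) * (∑ i, g i (s i)) ^ 2
      = ∑ i, ∑ j, ∑ s : ι → A, (∏ k, w k (s k)) * (g i (s i) * g j (s j)) := by
        simp_rw [sq, sum_mul_sum, mul_sum]
        rw [sum_comm]
        exact sum_congr rfl fun i _ => sum_comm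
    _ = ∑ i, ∑ a, w i a * g i a ^ 2 := by simp_rw [hcross, sum_ite_eq, if_pos (mem_univ _)]
    _ ≤ ∑ i, ∑ a, w i a := sum_le_sum fun i _ => sum_le_sum fun a _ =>
        mul_le_of_le_one_right ((hw i).1 a) (sq_le_one_iff_abs_le_one _ |>.2 (hg₁ i a))
    _ = Fintype.card ι := by simp [hsum]

end ProductWeights

theorem dist_sq_le_sum_sq {ι : Type*} [Fintype ι] (x y : ι → ℝ) :
    dist x y ^ 2 ≤ ∑ i, (x i - y i) ^ 2 := by
  have hsum : 0 ≤ ∑ i, (x i - y i) ^ 2 := sum_nonneg fun i _ => sq_nonneg _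
  have hdist : dist x y ≤ √(∑ i, (x i - y i) ^ 2) :=
    (dist_pi_le_iff (Real.sqrt_nonneg _)).2 fun i => by
      rw [Real.dist_eq]
      exact Real.abs_le_sqrt <|
        single_le_sum (f := fun i => (x i - y i) ^ 2) (fun i _ => sq_nonneg _) (mem_univ i)
  calc dist x y ^ 2 ≤ √(∑ i, (x i - y i) ^ 2) ^ 2 := pow_le_pow_left₀ dist_nonneg hdist 2
    _ = ∑ i, (x i - y i) ^ 2 := Real.sq_sqrt hsum

theorem abs_sub_le_add_mul_dist_sq {E : Type*} [PseudoMetricSpace E] {f : E → ℝ} {M ε η : ℝ}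
    (hM : ∀ z, |f z| ≤ M) (hε : 0 ≤ ε) (hη : 0 < η) {x y : E}
    (hf : dist x y < η → |f x - f y| ≤ ε) :
    |f x - f y| ≤ ε + 2 * M / η ^ 2 * dist x y ^ 2 := by
  have hM₀ : 0 ≤ M := (abs_nonneg _).trans (hM x)
  rcases lt_or_ge (dist x y) η with hnear | hfar
  · have : 0 ≤ 2 * M / η ^ 2 * dist x y ^ 2 := by positivity
    linarith [hf hnear]
  · have hosc : |f x - f y| ≤ 2 * M := (abs_sub _ _).trans (by linarith [hM x, hM y])
    have hcheb : 2 * M ≤ 2 * M / η ^ 2 * dist x y ^ 2 := by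
      rw [div_mul_eq_mul_div, le_div_iff₀ (by positivity)]
      exact mul_le_mul_of_nonneg_left (pow_le_pow_left₀ hη.le hfar 2) (by positivity)
    linarith

theorem exists_abs_le_of_continuous {ι K : Type*} [Fintype ι] [TopologicalSpace K]
    [CompactSpace K] {f : ι → K → ℝ} (hf : ∀ i, Continuous (f i)) :
    ∃ M, 0 ≤ M ∧ ∀ i x, |f i x| ≤ M := by
  let F := BoundedContinuousFunction.mkOfCompact ⟨fun x i => f i x, continuous_pi hf⟩
  exact ⟨‖F‖, norm_nonneg _, fun i x => (norm_le_pi_norm (F x) i).trans (F.norm_coe_le_norm x)⟩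

section Discounting

variable {γ : ℝ}

theorem summable_pow_mul_of_abs_le (hγ₀ : 0 ≤ γ) (hγ₁ : γ < 1) {a : ℕ → ℝ} {M : ℝ}
    (ha : ∀ t, |a t| ≤ M) : Summable fun t => γ ^ t * a t :=
  (summable_geometric_of_lt_one hγ₀ hγ₁ |>.mul_right M).of_norm_bounded fun t => by
    rw [Real.norm_eq_abs, abs_mul, abs_of_nonneg (pow_nonneg hγ₀ t)]
    exact mul_le_mul_of_nonneg_left (ha t) (pow_nonneg hγ₀ t)

theorem tsum_pow_mul_le (hγ₀ : 0 ≤ γ) (hγ₁ : γ < 1) {a : ℕ → ℝ} {M : ℝ}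
    (ha : ∀ t, |a t| ≤ M) : ∑' t, γ ^ t * a t ≤ M / (1 - γ) :=
  calc ∑' t, γ ^ t * a t ≤ ∑' t, γ ^ t * M :=
        (summable_pow_mul_of_abs_le hγ₀ hγ₁ ha).tsum_le_tsum
          (fun t => mul_le_mul_of_nonneg_left ((le_abs_self _).trans (ha t)) (pow_nonneg hγ₀ t))
          (summable_geometric_of_lt_one hγ₀ hγ₁ |>.mul_right M)
    _ = M / (1 - γ) := by rw [tsum_mul_right, tsum_geometric_of_lt_one hγ₀ hγ₁, inv_mul_eq_div]

theorem abs_tsum_pow_mul_sub_le (hγ₀ : 0 ≤ γ) (hγ₁ : γ < 1) {a b : ℕ → ℝ} {M L δ : ℝ}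
    (ha : ∀ t, |a t| ≤ M) (hb : ∀ t, |b t| ≤ M) (hab : ∀ t, |a t - b t| ≤ δ * (1 + L * t)) :
    |∑' t, γ ^ t * a t - ∑' t, γ ^ t * b t| ≤ δ * ∑' t : ℕ, γ ^ t * (1 + L * t) := by
  have hgeom : Summable fun t : ℕ => γ ^ t * (1 + L * t) := by
    have hlin := summable_pow_mul_geometric_of_norm_lt_one 1
      (by rwa [Real.norm_eq_abs, abs_of_nonneg hγ₀] : ‖γ‖ < 1)
    refine ((summable_geometric_of_lt_one hγ₀ hγ₁).add (hlin.mul_left L)).congr fun t => ?_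
    simp only [pow_one]
    ring
  rw [← (summable_pow_mul_of_abs_le hγ₀ hγ₁ ha).tsum_sub (summable_pow_mul_of_abs_le hγ₀ hγ₁ hb),
    ← tsum_mul_left, ← Real.norm_eq_abs]
  refine tsum_of_norm_bounded (hgeom.mul_left δ).hasSum fun t => ?_
  rw [← mul_sub, Real.norm_eq_abs, abs_mul, abs_of_nonneg (pow_nonneg hγ₀ t), mul_left_comm]
  exact mul_le_mul_of_nonneg_left (hab t) (pow_nonneg hγ₀ t)

end Discounting

section MarkovChain

variable {S : Type*} [Fintype S]

def stateLaw (ν₀ : S → ℝ) (K : ℕ → S → S → ℝ) : ℕ → S → ℝ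
  | 0 => ν₀
  | t + 1 => fun y => ∑ x, stateLaw ν₀ K t x * K t x y

variable {ν₀ : S → ℝ} {K K' : ℕ → S → S → ℝ}

theorem stateLaw_mem_stdSimplex (hν₀ : ν₀ ∈ stdSimplex ℝ S)
    (hK : ∀ t x, K t x ∈ stdSimplex ℝ S) : ∀ t, stateLaw ν₀ K t ∈ stdSimplex ℝ S
  | 0 => hν₀
  | t + 1 => sum_mul_mem_stdSimplex (stateLaw_mem_stdSimplex hν₀ hK t) (hK t)

theorem sum_abs_stateLaw_sub_le (hν₀ : ν₀ ∈ stdSimplex ℝ S)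
    (hK : ∀ t x, K t x ∈ stdSimplex ℝ S) (hK' : ∀ t x, K' t x ∈ stdSimplex ℝ S) {δ : ℝ}
    (hKK' : ∀ t x, ∑ y, |K t x y - K' t x y| ≤ δ) (t : ℕ) :
    ∑ x, |stateLaw ν₀ K t x - stateLaw ν₀ K' t x| ≤ t * δ := by
  induction t with
  | zero => simp [stateLaw]
  | succ t ih =>
    set ν := stateLaw ν₀ K t
    set ν' := stateLaw ν₀ K' t
    have hν := stateLaw_mem_stdSimplex hν₀ hK t
    calc ∑ y, |stateLaw ν₀ K (t + 1) y - stateLaw ν₀ K' (t + 1) y|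
        = ∑ y, |∑ x, (ν x * (K t x y - K' t x y) + (ν x - ν' x) * K' t x y)| := by
          refine sum_congr rfl fun y _ => ?_
          simp only [stateLaw, ← sum_sub_distrib]
          congr 1
          exact sum_congr rfl fun x _ => by ring
      _ ≤ ∑ y, ∑ x, (ν x * |K t x y - K' t x y| + |ν x - ν' x| * K' t x y) := by
          refine sum_le_sum fun y _ => (abs_sum_le_sum_abs _ _).trans <| sum_le_sum fun x _ => ?_
          refine (abs_add_le _ _).trans_eq ?_
          rw [abs_mul, abs_mul, abs_of_nonneg (hν.1 x), abs_of_nonneg ((hK' t x).1 y)]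
      _ = ∑ x, ν x * ∑ y, |K t x y - K' t x y| + ∑ x, |ν x - ν' x| := by
          rw [sum_comm, ← sum_add_distrib]
          refine sum_congr rfl fun x _ => ?_
          rw [sum_add_distrib, ← mul_sum, ← mul_sum, (hK' t x).2, mul_one]
      _ ≤ δ + t * δ := add_le_add
          ((le_abs_self _).trans (abs_sum_mul_le_of_mem_stdSimplex hν (fun x =>
            (abs_of_nonneg (sum_nonneg fun y _ => abs_nonneg _)).trans_le (hKK' t x)))) ih
      _ = (t + 1 : ℕ) * δ := by push_cast; ring

theorem abs_tsum_stateLaw_sub_le {γ : ℝ} (hγ₀ : 0 ≤ γ) (hγ₁ : γ < 1) {R R' : ℕ → S → ℝ}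
    {M δ : ℝ} (hM : 0 ≤ M) (hν₀ : ν₀ ∈ stdSimplex ℝ S) (hK : ∀ t x, K t x ∈ stdSimplex ℝ S)
    (hK' : ∀ t x, K' t x ∈ stdSimplex ℝ S) (hR : ∀ t x, |R t x| ≤ M)
    (hR' : ∀ t x, |R' t x| ≤ M) (hKK' : ∀ t x y, |K t x y - K' t x y| ≤ δ)
    (hRR' : ∀ t x, |R t x - R' t x| ≤ δ) :
    |∑' t, γ ^ t * ∑ x, stateLaw ν₀ K t x * R t x
        - ∑' t, γ ^ t * ∑ x, stateLaw ν₀ K' t x * R' t x|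
      ≤ δ * ∑' t : ℕ, γ ^ t * (1 + M * Fintype.card S * t) := by
  have hlaw : ∀ t, ∑ x, |stateLaw ν₀ K t x - stateLaw ν₀ K' t x| ≤ t * (Fintype.card S * δ) :=
    sum_abs_stateLaw_sub_le hν₀ hK hK' fun t x =>
      (sum_le_sum fun y _ => hKK' t x y).trans_eq (by simp)
  refine abs_tsum_pow_mul_sub_le hγ₀ hγ₁
    (fun t => abs_sum_mul_le_of_mem_stdSimplex (stateLaw_mem_stdSimplex hν₀ hK t) (hR t))
    (fun t => abs_sum_mul_le_of_mem_stdSimplex (stateLaw_mem_stdSimplex hν₀ hK' t) (hR' t))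
    fun t => ?_
  refine (abs_sum_mul_sub_sum_mul_le (stateLaw_mem_stdSimplex hν₀ hK t) (hRR' t) (hR' t)).trans ?_
  nlinarith [mul_le_mul_of_nonneg_left (hlaw t) hM]

end MarkovChain

section MeanField

variable {X U X0 : Type*} [Fintype U]

noncomputable def meanRule (N : ℕ) (d : Fin (N + 1) → X → stdSimplex ℝ U) :
    X → stdSimplex ℝ U := fun x =>
  ⟨fun u => (∑ i, (d i x).1 u) / ((N : ℝ) + 1),
    fun u => div_nonneg (sum_nonneg fun i _ => (d i x).2.1 u) (by positivity), by
      rw [← sum_div, sum_comm]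
      simp only [fun i => (d i x).2.2, sum_const, card_univ, Fintype.card_fin, nsmul_one]
      push_cast
      exact div_self (by positivity)⟩

noncomputable def meanPolicy (N : ℕ) (πv : Fin (N + 1) → ℕ → X0 → X → stdSimplex ℝ U) :
    ℕ → X0 → X → stdSimplex ℝ U := fun t x0 => meanRule N fun i => πv i t x0

theorem meanPolicy_const (N : ℕ) (π : ℕ → X0 → X → stdSimplex ℝ U) :
    meanPolicy N (fun _ => π) = π := by
  funext t x0 x
  refine Subtype.ext (funext fun u => ?_)
  simp only [meanPolicy, meanRule, sum_const, card_univ, Fintype.card_fin, nsmul_eq_mul]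
  push_cast
  field_simp

variable [Fintype X] (μ0 : stdSimplex ℝ X)

theorem jointG_meanRule_apply {N : ℕ} (d : Fin (N + 1) → X → stdSimplex ℝ U) (p : X × U) :
    (jointG μ0 (meanRule N d)).1 p = (∑ i, (jointG μ0 (d i)).1 p) / (N + 1) := by
  simp only [jointG, meanRule, div_mul_eq_mul_div, sum_mul, sum_div]

theorem sampleWeight_eq_prod {N : ℕ} (d : Fin (N + 1) → X → stdSimplex ℝ U)
    (s : Fin (N + 1) → X × U) : sampleWeight N μ0 d s = ∏ i, (jointG μ0 (d i)).1 (s i) := by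
  simp only [sampleWeight, jointG, mul_comm]

theorem sampleWeight_mem_stdSimplex {N : ℕ} (d : Fin (N + 1) → X → stdSimplex ℝ U) :
    sampleWeight N μ0 d ∈ stdSimplex ℝ (Fin (N + 1) → X × U) := by
  convert prod_apply_mem_stdSimplex fun i => (jointG μ0 (d i)).2 using 1
  exact funext (sampleWeight_eq_prod μ0 d)

variable [Fintype X0] (μ00 : stdSimplex ℝ X0) (P0 : X0 → stdSimplex ℝ (X × U) → stdSimplex ℝ X0)

theorem envLawMF_eq_stateLaw (π : ℕ → X0 → X → stdSimplex ℝ U) :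
    envLawMF μ0 μ00 P0 π = stateLaw μ00.1 fun t x y => (P0 x (jointG μ0 (π t x))).1 y := by
  funext t
  induction t with
  | zero => rfl
  | succ t ih => simp only [envLawMF, stateLaw, ih]

theorem bddAbove_range_JMF {r : X0 → stdSimplex ℝ (X × U) → ℝ} {γ : ℝ}
    (hγ : γ ∈ Set.Ioo (0 : ℝ) 1) {M : ℝ} (hM : ∀ x0 G, |r x0 G| ≤ M) :
    BddAbove (Set.range (JMF μ0 μ00 P0 r γ)) := by
  refine ⟨M / (1 - γ), ?_⟩
  rintro _ ⟨π, rfl⟩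
  rw [JMF, envLawMF_eq_stateLaw]
  exact tsum_pow_mul_le hγ.1.le hγ.2 fun t => abs_sum_mul_le_of_mem_stdSimplex
    (stateLaw_mem_stdSimplex μ00.2 (fun t x => (P0 x _).2) t) fun x => hM x _

section Empirical

variable [DecidableEq X] [DecidableEq U]

theorem empDist_sub_jointG_meanRule {N : ℕ} (d : Fin (N + 1) → X → stdSimplex ℝ U)
    (s : Fin (N + 1) → X × U) (p : X × U) :
    (empDist N s).1 p - (jointG μ0 (meanRule N d)).1 p
      = (∑ i, ((if s i = p then 1 else 0) - (jointG μ0 (d i)).1 p)) / (N + 1) := by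
  rw [jointG_meanRule_apply, sum_sub_distrib, sub_div]
  rfl

theorem sum_sampleWeight_mul_sq_le {N : ℕ} (d : Fin (N + 1) → X → stdSimplex ℝ U) (p : X × U) :
    ∑ s, sampleWeight N μ0 d s * ((empDist N s).1 p - (jointG μ0 (meanRule N d)).1 p) ^ 2
      ≤ 1 / (N + 1) := by
  have hw : ∀ i, (jointG μ0 (d i)).1 ∈ stdSimplex ℝ (X × U) := fun i => (jointG μ0 (d i)).2
  have hvar := sum_prod_mul_sq_sum_le hw
    (g := fun i a => (if a = p then 1 else 0) - (jointG μ0 (d i)).1 p)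
    (fun i => by simp [mul_sub, sum_sub_distrib, ← sum_mul, (hw i).2])
    (fun i a => by
      have h₀ : 0 ≤ (jointG μ0 (d i)).1 p := (hw i).1 p
      have h₁ : (jointG μ0 (d i)).1 p ≤ 1 := stdSimplex.le_one (jointG μ0 (d i)) p
      exact abs_sub_le_iff.2 ⟨by split_ifs <;> linarith, by split_ifs <;> linarith⟩)
  simp_rw [sampleWeight_eq_prod, empDist_sub_jointG_meanRule, div_pow, ← mul_div_assoc,
    ← sum_div]
  rw [div_le_div_iff₀ (by positivity) (by positivity)]
  simp only [Fintype.card_fin] at hvar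
  push_cast at hvar ⊢
  calc _ ≤ ((N : ℝ) + 1) * (N + 1) := mul_le_mul_of_nonneg_right hvar (by positivity)
    _ = 1 * ((N : ℝ) + 1) ^ 2 := by ring

theorem sum_sampleWeight_mul_dist_sq_le {N : ℕ} (d : Fin (N + 1) → X → stdSimplex ℝ U) :
    ∑ s, sampleWeight N μ0 d s * dist (empDist N s) (jointG μ0 (meanRule N d)) ^ 2
      ≤ Fintype.card (X × U) / (N + 1) :=
  calc ∑ s, sampleWeight N μ0 d s * dist (empDist N s) (jointG μ0 (meanRule N d)) ^ 2
      ≤ ∑ s, sampleWeight N μ0 d s *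
          ∑ p, ((empDist N s).1 p - (jointG μ0 (meanRule N d)).1 p) ^ 2 :=
        sum_le_sum fun s _ => mul_le_mul_of_nonneg_left (dist_sq_le_sum_sq _ _)
          ((sampleWeight_mem_stdSimplex μ0 d).1 s)
    _ = ∑ p, ∑ s, sampleWeight N μ0 d s *
          ((empDist N s).1 p - (jointG μ0 (meanRule N d)).1 p) ^ 2 := by
        simp_rw [mul_sum]
        exact sum_comm
    _ ≤ ∑ _p : X × U, 1 / ((N : ℝ) + 1) := sum_le_sum fun p _ => sum_sampleWeight_mul_sq_le μ0 d p
    _ = Fintype.card (X × U) / (N + 1) := by simp [div_eq_mul_inv]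

theorem abs_empExp_sub_le {f : stdSimplex ℝ (X × U) → ℝ} {M ε η : ℝ} (hM : ∀ G, |f G| ≤ M)
    (hε : 0 ≤ ε) (hη : 0 < η) (hf : ∀ G G', dist G G' < η → |f G - f G'| ≤ ε) (N : ℕ)
    (d : Fin (N + 1) → X → stdSimplex ℝ U) :
    |empExp N μ0 d f - f (jointG μ0 (meanRule N d))|
      ≤ ε + 2 * M / η ^ 2 * (Fintype.card (X × U) / (N + 1)) := by
  set b := jointG μ0 (meanRule N d)
  have hW := sampleWeight_mem_stdSimplex μ0 d
  have hM₀ : 0 ≤ M := (abs_nonneg _).trans (hM b)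
  calc |empExp N μ0 d f - f b| ≤ ∑ s, sampleWeight N μ0 d s * |f (empDist N s) - f b| :=
        abs_sum_mul_sub_le hW _ _
    _ ≤ ∑ s, sampleWeight N μ0 d s * (ε + 2 * M / η ^ 2 * dist (empDist N s) b ^ 2) :=
        sum_le_sum fun s _ => mul_le_mul_of_nonneg_left
          (abs_sub_le_add_mul_dist_sq hM hε hη (hf _ _)) (hW.1 s)
    _ = ε + 2 * M / η ^ 2 * ∑ s, sampleWeight N μ0 d s * dist (empDist N s) b ^ 2 := by
        simp only [mul_add, sum_add_distrib, ← sum_mul, hW.2, one_mul, mul_sum]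
        congr 1
        exact sum_congr rfl fun s _ => by ring
    _ ≤ ε + 2 * M / η ^ 2 * (Fintype.card (X × U) / (N + 1)) := by
        gcongr
        exact sum_sampleWeight_mul_dist_sq_le μ0 d

theorem eventually_abs_empExp_sub_le {f : stdSimplex ℝ (X × U) → ℝ} (hf : Continuous f)
    {δ : ℝ} (hδ : 0 < δ) :
    ∀ᶠ N in atTop, ∀ d : Fin (N + 1) → X → stdSimplex ℝ U,
      |empExp N μ0 d f - f (jointG μ0 (meanRule N d))| ≤ δ := by
  obtain ⟨M, hM⟩ := isCompact_univ.exists_bound_of_continuousOn hf.continuousOn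
  obtain ⟨η, hη, hfη⟩ := Metric.uniformContinuous_iff.1
    (CompactSpace.uniformContinuous_of_continuous hf) (δ / 2) (half_pos hδ)
  have hsmall : ∀ᶠ N : ℕ in atTop,
      2 * M / η ^ 2 * (Fintype.card (X × U) / ((N : ℝ) + 1)) < δ / 2 := by
    have hlim := (tendsto_one_div_add_atTop_nhds_zero_nat (𝕜 := ℝ)).const_mul
      (2 * M / η ^ 2 * Fintype.card (X × U))
    rw [mul_zero] at hlim
    refine (hlim.eventually_lt_const (half_pos hδ)).mono fun N hN => ?_
    rwa [mul_one_div, mul_div_assoc] at hN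
  filter_upwards [hsmall] with N hN d
  have := abs_empExp_sub_le μ0 (fun G => by simpa using hM G trivial) (half_pos hδ).le hη
    (fun G G' h => (Real.dist_eq _ _ ▸ hfη h).le) N d
  linarith

theorem envLawN_eq_stateLaw (N : ℕ) (πv : Fin (N + 1) → ℕ → X0 → X → stdSimplex ℝ U) :
    envLawN N μ0 μ00 P0 πv
      = stateLaw μ00.1 fun t x y => empExp N μ0 (fun i => πv i t x) fun G => (P0 x G).1 y := by
  funext t
  induction t with
  | zero => rfl
  | succ t ih => simp only [envLawN, stateLaw, ih]

theorem abs_JN_sub_JMF_meanPolicy_le {r : X0 → stdSimplex ℝ (X × U) → ℝ} {γ : ℝ}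
    (hγ : γ ∈ Set.Ioo (0 : ℝ) 1) {M δ : ℝ} (hM₀ : 0 ≤ M) (hM : ∀ x0 G, |r x0 G| ≤ M) {N : ℕ}
    (hP : ∀ x0 y d, |empExp N μ0 d (fun G => (P0 x0 G).1 y)
      - (P0 x0 (jointG μ0 (meanRule N d))).1 y| ≤ δ)
    (hr : ∀ x0 d, |empExp N μ0 d (r x0) - r x0 (jointG μ0 (meanRule N d))| ≤ δ)
    (πv : Fin (N + 1) → ℕ → X0 → X → stdSimplex ℝ U) :
    |JN N μ0 μ00 P0 r γ πv - JMF μ0 μ00 P0 r γ (meanPolicy N πv)|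
      ≤ δ * ∑' t : ℕ, γ ^ t * (1 + M * Fintype.card X0 * t) := by
  rw [JN, JMF, envLawN_eq_stateLaw, envLawMF_eq_stateLaw]
  exact abs_tsum_stateLaw_sub_le hγ.1.le hγ.2 hM₀ μ00.2
    (fun t x => sum_mul_mem_stdSimplex (sampleWeight_mem_stdSimplex μ0 _) fun s => (P0 x _).2)
    (fun t x => (P0 x _).2)
    (fun t x => abs_sum_mul_le_of_mem_stdSimplex (sampleWeight_mem_stdSimplex μ0 _) fun s => hM x _)
    (fun t x => hM x _) (fun t x y => hP x y _) (fun t x => hr x _)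

theorem eventually_abs_JN_sub_JMF_meanPolicy_le {r : X0 → stdSimplex ℝ (X × U) → ℝ} {γ : ℝ}
    (hγ : γ ∈ Set.Ioo (0 : ℝ) 1) {M : ℝ} (hM₀ : 0 ≤ M) (hM : ∀ x0 G, |r x0 G| ≤ M)
    (hr : ∀ x0, Continuous (r x0)) (hP0 : ∀ x0, Continuous (P0 x0)) {ε : ℝ} (hε : 0 < ε) :
    ∀ᶠ N in atTop, ∀ πv : Fin (N + 1) → ℕ → X0 → X → stdSimplex ℝ U,
      |JN N μ0 μ00 P0 r γ πv - JMF μ0 μ00 P0 r γ (meanPolicy N πv)| ≤ ε := by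
  obtain ⟨δ, hδ, hδε⟩ := exists_pos_mul_lt hε (∑' t : ℕ, γ ^ t * (1 + M * Fintype.card X0 * t))
  have hrN := eventually_all.2 fun x0 => eventually_abs_empExp_sub_le μ0 (hr x0) hδ
  have hPN := eventually_all.2 fun x0 => eventually_all.2 fun y =>
    eventually_abs_empExp_sub_le μ0 ((continuous_apply y).comp
      (continuous_subtype_val.comp (hP0 x0))) hδ
  filter_upwards [hrN, hPN] with N hrN hPN πv
  refine (abs_JN_sub_JMF_meanPolicy_le μ0 μ00 P0 hγ hM₀ hM hPN hrN πv).trans ?_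
  linarith [mul_comm δ (∑' t : ℕ, γ ^ t * (1 + M * Fintype.card X0 * t))]

end Empirical

end MeanField

theorem mean_field_optimal_policy_approximately_pareto_optimal_general
    {X U X0 : Type*} [Fintype X] [Fintype U] [Fintype X0]
    [DecidableEq X] [DecidableEq U]
    (μ0 : ↥(stdSimplex ℝ X)) (μ00 : ↥(stdSimplex ℝ X0))
    (P0 : X0 → ↥(stdSimplex ℝ (X × U)) → ↥(stdSimplex ℝ X0))
    (r : X0 → ↥(stdSimplex ℝ (X × U)) → ℝ)
    (γ : ℝ) (hγ : γ ∈ Set.Ioo (0 : ℝ) 1)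
    -- Assumption 1: continuity of r and P⁰ in the state-action distribution
    (hr : ∀ x0, Continuous (r x0)) (hP0 : ∀ x0, Continuous (P0 x0)) :
    ∀ ε : ℝ, 0 < ε → ∃ Nε : ℕ, ∀ N : ℕ, Nε < N →
      ∀ πstar : ℕ → X0 → X → ↥(stdSimplex ℝ U),
        JMF μ0 μ00 P0 r γ πstar
          = (⨆ π : ℕ → X0 → X → ↥(stdSimplex ℝ U), JMF μ0 μ00 P0 r γ π) →
        JN N μ0 μ00 P0 r γ (fun _ => πstar)
          ≥ (⨆ πv : Fin (N + 1) → ℕ → X0 → X → ↥(stdSimplex ℝ U),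
              JN N μ0 μ00 P0 r γ πv) - ε := by
  intro ε hε
  obtain ⟨M, hM₀, hM⟩ := exists_abs_le_of_continuous hr
  obtain ⟨Nε, hNε⟩ := eventually_atTop.1
    (eventually_abs_JN_sub_JMF_meanPolicy_le μ0 μ00 P0 hγ hM₀ hM hr hP0 (half_pos hε))
  refine ⟨Nε, fun N hN πstar hopt => ?_⟩
  have hclose := hNε N hN.le
  have hle : ∀ πv, JN N μ0 μ00 P0 r γ πv ≤ JMF μ0 μ00 P0 r γ πstar + ε / 2 := fun πv => by
    have hmf := hopt ▸ le_ciSup (bddAbove_range_JMF μ0 μ00 P0 hγ hM) (meanPolicy N πv)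
    linarith [(abs_le.1 (hclose πv)).2]
  have hstar := (abs_le.1 (hclose fun _ => πstar)).1
  rw [meanPolicy_const] at hstar
  have : Nonempty (Fin (N + 1) → ℕ → X0 → X → stdSimplex ℝ U) := ⟨fun _ => πstar⟩
  linarith [ciSup_le hle]

/-- Under the continuity assumption on `r` and `P⁰`, for every `ε > 0` there
exists `N(ε)` such that for all `N > N(ε)`, any mean-field policy `π*` optimal for the
mean-field control problem (i.e. `J(π*) = sup_{π∈Π} J(π)`) is `ε`-Pareto optimal in the
`N`-agent problem: `J^N(π^N(π*)) ≥ sup_{(π¹,…,πᴺ) ∈ Π_N^N} J^N(π¹,…,πᴺ) − ε`.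
(The number of agents is written as `N + 1`; this only relabels `N(ε)`.) -/
theorem mean_field_optimal_policy_approximately_pareto_optimal
    {X U X0 : Type*} [Fintype X] [Fintype U] [Fintype X0]
    [Nonempty X] [Nonempty U] [Nonempty X0] [DecidableEq X] [DecidableEq U]
    (μ0 : ↥(stdSimplex ℝ X)) (μ00 : ↥(stdSimplex ℝ X0))
    (P0 : X0 → ↥(stdSimplex ℝ (X × U)) → ↥(stdSimplex ℝ X0))
    (r : X0 → ↥(stdSimplex ℝ (X × U)) → ℝ)
    (γ : ℝ) (hγ : γ ∈ Set.Ioo (0 : ℝ) 1)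
    -- Assumption 1: continuity of r and P⁰ in the state-action distribution
    (hr : ∀ x0, Continuous (r x0)) (hP0 : ∀ x0, Continuous (P0 x0)) :
    ∀ ε : ℝ, 0 < ε → ∃ Nε : ℕ, ∀ N : ℕ, Nε < N →
      ∀ πstar : ℕ → X0 → X → ↥(stdSimplex ℝ U),
        JMF μ0 μ00 P0 r γ πstar
          = (⨆ π : ℕ → X0 → X → ↥(stdSimplex ℝ U), JMF μ0 μ00 P0 r γ π) →
        JN N μ0 μ00 P0 r γ (fun _ => πstar)
          ≥ (⨆ πv : Fin (N + 1) → ℕ → X0 → X → ↥(stdSimplex ℝ U),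
              JN N μ0 μ00 P0 r γ πv) - ε :=
  mean_field_optimal_policy_approximately_pareto_optimal_general μ0 μ00 P0 r γ hγ hr hP0
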